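/- arXiv:2605.12091 — 4 statements merged into one kernel-verified Lean document; each statement's English description precedes it below -/
import Mathlib

section
/- Let p ∈ ℝⁿ, β ∈ ℝ, and let M be an m×n real matrix. Then the statement 'pᵀx ≤ β for all x ∈ ℝⁿ with x ≥ 1 (componentwise) and M·x ≤ 0' holds if and only if there exists v ∈ ℝᵐ with v ≥ 0 such that Mᵀv ≥ p and pᵀ·1 − vᵀM·1 ≤ β, where 1 denotes the all-ones vector. (Assume the feasible set {x : x ≥ 1, Mx ≤ 0} is nonempty.) -/
open Matrix Finset

lemma farkas_fin : ∀ (k : ℕ) {n : Type*} [Fintype n] (A : Fin k → n → ℝ) (c : n → ℝ),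
    (∀ x : n → ℝ, (∀ i, A i ⬝ᵥ x ≤ 0) → c ⬝ᵥ x ≤ 0) →
    ∃ y : Fin k → ℝ, (∀ i, 0 ≤ y i) ∧ ∀ j, c j = ∑ i, y i * A i j := by
  intro k
  induction k with
  | zero =>
    intro n _ A c h
    have hc : c = 0 := dotProduct_self_eq_zero.mp
      (le_antisymm (h c (fun i => i.elim0)) (Finset.sum_nonneg fun j _ => mul_self_nonneg _))
    exact ⟨fun i => 0, fun i => le_refl _, fun j => by simp [hc]⟩
  | succ k ih =>
    intro n _ A c h
    by_cases hc : ∀ x : n → ℝ, (∀ i : Fin k, A i.castSucc ⬝ᵥ x ≤ 0) → c ⬝ᵥ x ≤ 0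
    · obtain ⟨y', hy0, hy⟩ := ih (fun i => A i.castSucc) c hc
      refine ⟨Fin.snoc y' 0, ?_, ?_⟩
      · intro i
        induction i using Fin.lastCases with
        | last => simp
        | cast i => simpa using hy0 i
      · intro j
        rw [Fin.sum_univ_castSucc]
        simp [hy j]
    · push_neg at hc
      obtain ⟨x₀, hx₀, hcx₀⟩ := hc
      set d : ℝ := A (Fin.last k) ⬝ᵥ x₀ with hd
      have hd0 : 0 < d := by
        by_contra hdn
        push_neg at hdn
        have := h x₀ (fun i => by
          induction i using Fin.lastCases with
          | last => exact hdn
          | cast i => exact hx₀ i)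
        linarith
      set lam : Fin k → ℝ := fun i => (A i.castSucc ⬝ᵥ x₀) / d with hlam
      set A' : Fin k → n → ℝ := fun i => A i.castSucc - lam i • A (Fin.last k) with hA'
      set mu : ℝ := (c ⬝ᵥ x₀) / d with hmu
      set c' : n → ℝ := c - mu • A (Fin.last k) with hc'
      have hA'x₀ : ∀ i, A' i ⬝ᵥ x₀ = 0 := by
        intro i
        simp only [hA', sub_dotProduct, smul_dotProduct, smul_eq_mul, hlam]
        field_simp
        rw [hd]; ring
      have hc'x₀ : c' ⬝ᵥ x₀ = 0 := by
        simp only [hc', sub_dotProduct, smul_dotProduct, smul_eq_mul, hmu]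
        field_simp
        rw [hd]; ring
      have hmain : ∀ x : n → ℝ, (∀ i : Fin k, A' i ⬝ᵥ x ≤ 0) → c' ⬝ᵥ x ≤ 0 := by
        intro x hx
        set t : ℝ := (A (Fin.last k) ⬝ᵥ x) / d with ht
        set z : n → ℝ := x - t • x₀ with hz
        have hzlast : A (Fin.last k) ⬝ᵥ z = 0 := by
          simp only [hz, dotProduct_sub, dotProduct_smul, smul_eq_mul, ht, ← hd]
          field_simp
          ring
        have hzc : ∀ i : Fin k, A i.castSucc ⬝ᵥ z = A' i ⬝ᵥ x := by
          intro i
          have e1 : A i.castSucc ⬝ᵥ z = A' i ⬝ᵥ z + lam i * (A (Fin.last k) ⬝ᵥ z) := by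
            simp only [hA', sub_dotProduct, smul_dotProduct, smul_eq_mul]
            ring
          have e2 : A' i ⬝ᵥ z = A' i ⬝ᵥ x - t * (A' i ⬝ᵥ x₀) := by
            simp only [hz, dotProduct_sub, dotProduct_smul, smul_eq_mul]
          rw [e1, hzlast, e2, hA'x₀ i]; ring
        have hcz : c ⬝ᵥ z ≤ 0 := by
          apply h
          intro i
          induction i using Fin.lastCases with
          | last => exact le_of_eq hzlast
          | cast i => rw [hzc i]; exact hx i
        have e3 : c' ⬝ᵥ x = c' ⬝ᵥ z + t * (c' ⬝ᵥ x₀) := by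
          simp only [hz, dotProduct_sub, dotProduct_smul, smul_eq_mul]; ring
        have e4 : c' ⬝ᵥ z = c ⬝ᵥ z - mu * (A (Fin.last k) ⬝ᵥ z) := by
          simp only [hc', sub_dotProduct, smul_dotProduct, smul_eq_mul]
        rw [e3, hc'x₀, e4, hzlast]
        linarith
      obtain ⟨y', hy0, hy⟩ := ih A' c' hmain
      have hlamneg : ∀ i, lam i ≤ 0 := fun i =>
        div_nonpos_of_nonpos_of_nonneg (hx₀ i) hd0.le
      have hmupos : 0 < mu := div_pos hcx₀ hd0
      refine ⟨Fin.snoc y' (mu - ∑ i, y' i * lam i), ?_, ?_⟩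
      · intro i
        induction i using Fin.lastCases with
        | last =>
          simp only [Fin.snoc_last]
          have : ∑ i, y' i * lam i ≤ 0 :=
            Finset.sum_nonpos fun i _ => mul_nonpos_of_nonneg_of_nonpos (hy0 i) (hlamneg i)
          linarith
        | cast i => simpa using hy0 i
      · intro j
        rw [Fin.sum_univ_castSucc]
        simp only [Fin.snoc_castSucc, Fin.snoc_last]
        have hcj : c j = c' j + mu * A (Fin.last k) j := by
          simp [hc']
        have hAj : ∀ i : Fin k, A i.castSucc j = A' i j + lam i * A (Fin.last k) j := by
          intro i; simp [hA']
        rw [hcj, hy j]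
        have : ∑ i, y' i * A i.castSucc j
            = ∑ i, y' i * A' i j + (∑ i, y' i * lam i) * A (Fin.last k) j := by
          rw [Finset.sum_mul, ← Finset.sum_add_distrib]
          exact Finset.sum_congr rfl fun i _ => by rw [hAj i]; ring
        rw [this]; ring

lemma farkas_gen {ι n : Type*} [Fintype ι] [Fintype n] (A : ι → n → ℝ) (c : n → ℝ)
    (h : ∀ x : n → ℝ, (∀ i, A i ⬝ᵥ x ≤ 0) → c ⬝ᵥ x ≤ 0) :
    ∃ y : ι → ℝ, (∀ i, 0 ≤ y i) ∧ ∀ j, c j = ∑ i, y i * A i j := by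
  obtain ⟨y, hy0, hy⟩ := farkas_fin (Fintype.card ι)
    (fun i => A ((Fintype.equivFin ι).symm i)) c
    (fun x hx => h x fun i => by
      simpa using hx ((Fintype.equivFin ι) i))
  refine ⟨fun i => y ((Fintype.equivFin ι) i), fun i => hy0 _, fun j => ?_⟩
  rw [hy j]
  exact (Fintype.sum_equiv (Fintype.equivFin ι)
    (fun i => y ((Fintype.equivFin ι) i) * A i j)
    (fun i' => y i' * A ((Fintype.equivFin ι).symm i') j) (by simp)).symm

theorem lp_duality_certificate (m n : ℕ) (p : Fin n → ℝ) (beta : ℝ)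
    (M : Matrix (Fin m) (Fin n) ℝ)
    (hfeas : ∃ x : Fin n → ℝ, (fun _ => (1:ℝ)) ≤ x ∧ M.mulVec x ≤ 0) :
    (∀ x : Fin n → ℝ, (fun _ => (1:ℝ)) ≤ x → M.mulVec x ≤ 0 →
        dotProduct p x ≤ beta) ↔
    (∃ v : Fin m → ℝ, 0 ≤ v ∧ p ≤ Matrix.mulVec M.transpose v ∧
        dotProduct p (fun _ => (1:ℝ)) -
          dotProduct v (M.mulVec (fun _ => (1:ℝ))) ≤ beta) := by
  constructor
  · intro h
    obtain ⟨x₀, hx₀1, hx₀M⟩ := hfeas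
    set A : ((Fin m ⊕ Fin n) ⊕ Unit) → (Fin n ⊕ Unit) → ℝ :=
      fun i => match i with
        | Sum.inl (Sum.inl i) => Sum.elim (M i) (fun _ => 0)
        | Sum.inl (Sum.inr j) => Sum.elim (fun j' => if j' = j then -1 else 0) (fun _ => 1)
        | Sum.inr _ => Sum.elim (fun _ => 0) (fun _ => -1) with hA
    set c : (Fin n ⊕ Unit) → ℝ := Sum.elim p (fun _ => -beta) with hc
    have key : ∀ z : (Fin n ⊕ Unit) → ℝ, (∀ i, A i ⬝ᵥ z ≤ 0) → c ⬝ᵥ z ≤ 0 := by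
      intro z hz
      set x : Fin n → ℝ := fun j => z (Sum.inl j) with hx
      set t : ℝ := z (Sum.inr ()) with htdef
      have hM : ∀ i, M.mulVec x i ≤ 0 := by
        intro i
        have := hz (Sum.inl (Sum.inl i))
        simpa [hA, dotProduct, Matrix.mulVec, Fintype.sum_sum_type, hx] using this
      have hxt : ∀ j, t ≤ x j := by
        intro j
        have := hz (Sum.inl (Sum.inr j))
        simp [hA, dotProduct, Fintype.sum_sum_type, ite_mul, hx] at this
        linarith
      have ht : 0 ≤ t := by
        have := hz (Sum.inr ())
        simp [hA, dotProduct, Fintype.sum_sum_type] at this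
        linarith
      have goal' : p ⬝ᵥ x ≤ beta * t := by
        rcases eq_or_lt_of_le ht with ht0 | ht0
        · -- t = 0
          have hx0 : ∀ j, 0 ≤ x j := fun j => le_trans (le_of_eq ht0) (hxt j)
          have hpx : p ⬝ᵥ x ≤ 0 := by
            by_contra hpx
            push_neg at hpx
            set s : ℝ := max 0 ((beta - p ⬝ᵥ x₀) / (p ⬝ᵥ x) + 1) with hs
            have hs0 : 0 ≤ s := le_max_left _ _
            have hs1 : (beta - p ⬝ᵥ x₀) / (p ⬝ᵥ x) + 1 ≤ s := le_max_right _ _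
            have hfeas' : (fun _ => (1:ℝ)) ≤ x₀ + s • x := by
              intro j
              have := hx₀1 j
              have : (1:ℝ) ≤ x₀ j := this
              have h2 : 0 ≤ s * x j := mul_nonneg hs0 (hx0 j)
              show (1:ℝ) ≤ x₀ j + s * x j
              linarith
            have hMfeas' : M.mulVec (x₀ + s • x) ≤ 0 := by
              intro i
              rw [Matrix.mulVec_add, Matrix.mulVec_smul]
              have h1 : M.mulVec x₀ i ≤ 0 := hx₀M i
              have h2 : s • M.mulVec x i ≤ 0 := by
                have := hM i
                simpa [smul_eq_mul] using mul_nonpos_of_nonneg_of_nonpos hs0 this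
              show M.mulVec x₀ i + (s • M.mulVec x) i ≤ 0
              simp only [Pi.smul_apply, smul_eq_mul] at h2 ⊢
              linarith
            have hb := h (x₀ + s • x) hfeas' hMfeas'
            rw [dotProduct_add, dotProduct_smul, smul_eq_mul] at hb
            have hdiv := div_mul_cancel₀ (beta - p ⬝ᵥ x₀) (ne_of_gt hpx)
            nlinarith
          rw [← ht0, mul_zero]
          exact hpx
        · -- t > 0
          have hfeas' : (fun _ => (1:ℝ)) ≤ t⁻¹ • x := by
            intro j
            show (1:ℝ) ≤ t⁻¹ * x j
            rw [← inv_mul_cancel₀ (ne_of_gt ht0)]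
            exact mul_le_mul_of_nonneg_left (hxt j) (inv_pos.mpr ht0).le
          have hMfeas' : M.mulVec (t⁻¹ • x) ≤ 0 := by
            intro i
            rw [Matrix.mulVec_smul]
            show t⁻¹ • M.mulVec x i ≤ 0
            simpa [smul_eq_mul] using
              mul_nonpos_of_nonneg_of_nonpos (inv_pos.mpr ht0).le (hM i)
          have hb := h _ hfeas' hMfeas'
          rw [dotProduct_smul, smul_eq_mul] at hb
          calc p ⬝ᵥ x = t * (t⁻¹ * (p ⬝ᵥ x)) := by field_simp
            _ ≤ t * beta := mul_le_mul_of_nonneg_left hb ht0.le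
            _ = beta * t := mul_comm _ _
      have : c ⬝ᵥ z = p ⬝ᵥ x - beta * t := by
        simp [hc, dotProduct, Fintype.sum_sum_type, hx, ← htdef]
        ring
      linarith
    obtain ⟨y, hy0, hy⟩ := farkas_gen A c key
    set v : Fin m → ℝ := fun i => y (Sum.inl (Sum.inl i)) with hv
    set sl : Fin n → ℝ := fun j => y (Sum.inl (Sum.inr j)) with hsl
    set r : ℝ := y (Sum.inr ()) with hr
    have hj : ∀ j, p j = (∑ i, v i * M i j) - sl j := by
      intro j
      have := hy (Sum.inl j)
      simpa [hA, hc, Fintype.sum_sum_type, mul_ite, hv, hsl, sub_eq_add_neg] using this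
    have hlast : -beta = (∑ j, sl j) - r := by
      have := hy (Sum.inr ())
      simpa [hA, hc, Fintype.sum_sum_type, hsl, hr, sub_eq_add_neg] using this
    refine ⟨v, fun i => hy0 _, ?_, ?_⟩
    · intro j
      have h1 := hj j
      have h2 : 0 ≤ sl j := hy0 _
      have h3 : M.transpose.mulVec v j = ∑ i, v i * M i j := by
        simp [Matrix.mulVec, dotProduct, Matrix.transpose_apply, mul_comm]
      show p j ≤ M.transpose.mulVec v j
      rw [h3]
      linarith
    · have e1 : p ⬝ᵥ (fun _ => (1:ℝ)) = ∑ j, p j := by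
        simp [dotProduct]
      have e2 : v ⬝ᵥ (M.mulVec fun _ => (1:ℝ)) = ∑ j, ∑ i, v i * M i j := by
        simp only [dotProduct, Matrix.mulVec, mul_one]
        conv_rhs => rw [Finset.sum_comm]
        exact Finset.sum_congr rfl fun i _ => Finset.mul_sum _ _ _
      have e3 : ∑ j, p j = (∑ j, ∑ i, v i * M i j) - ∑ j, sl j := by
        rw [← Finset.sum_sub_distrib]
        exact Finset.sum_congr rfl fun j _ => hj j
      have hr0 : 0 ≤ r := hy0 _
      rw [e1, e2]
      linarith
  · rintro ⟨v, hv0, hvp, hvb⟩ x hx1 hxM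
    have key : p ⬝ᵥ (x - fun _ => (1:ℝ)) ≤ (M.transpose.mulVec v) ⬝ᵥ (x - fun _ => (1:ℝ)) := by
      apply Finset.sum_le_sum
      intro j _
      exact mul_le_mul_of_nonneg_right (hvp j)
        (by simpa using sub_nonneg.mpr (hx1 j))
    rw [dotProduct_sub, dotProduct_sub] at key
    have h2 : ∀ w : Fin n → ℝ, (M.transpose.mulVec v) ⬝ᵥ w = v ⬝ᵥ M.mulVec w := by
      intro w
      rw [Matrix.mulVec_transpose, ← Matrix.dotProduct_mulVec]
    have h3 : v ⬝ᵥ M.mulVec x ≤ 0 :=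
      Finset.sum_nonpos fun i _ => mul_nonpos_of_nonneg_of_nonpos (hv0 i) (hxM i)
    rw [h2 x, h2 (fun _ => 1)] at key
    linarith
end

section
/- Let a, b ∈ ℝⁿ with a − b ≤ 0 (componentwise) and let c, d ∈ ℝ with (a − b)ᵀ·1 ≤ d − c, where 1 is the all-ones vector. Suppose additionally that aᵀx + c > 0 and bᵀx + d > 0 for all x ≥ 1. Then for every x ∈ ℝⁿ with x ≥ 1 (componentwise), log₂(aᵀx + c) ≤ log₂(bᵀx + d). -/
theorem log_template_mono (n : ℕ) (a b : Fin n → ℝ) (c d : ℝ)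
    (hab : a - b ≤ 0)
    (hsum : dotProduct (a - b) (fun _ => (1:ℝ)) ≤ d - c)
    (hpos₁ : ∀ x : Fin n → ℝ, (fun _ => (1:ℝ)) ≤ x → 0 < dotProduct a x + c)
    (hpos₂ : ∀ x : Fin n → ℝ, (fun _ => (1:ℝ)) ≤ x → 0 < dotProduct b x + d) :
    ∀ x : Fin n → ℝ, (fun _ => (1:ℝ)) ≤ x →
      Real.logb 2 (dotProduct a x + c) ≤ Real.logb 2 (dotProduct b x + d) := by
  intro x hx
  have hx1 : ∀ i, (1:ℝ) ≤ x i := fun i => hx i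
  have hab' : ∀ i, a i - b i ≤ 0 := fun i => hab i
  have key : dotProduct (a - b) x ≤ dotProduct (a - b) (fun _ => (1:ℝ)) := by
    unfold dotProduct
    apply Finset.sum_le_sum
    intro i _
    simp only [Pi.sub_apply]
    have := hab' i
    nlinarith [hx1 i]
  have h2 : dotProduct (a - b) x = dotProduct a x - dotProduct b x := by
    simp [sub_dotProduct]
  have hle : dotProduct a x + c ≤ dotProduct b x + d := by
    have := key.trans hsum
    rw [h2] at this
    linarith
  exact Real.logb_le_logb_of_le one_lt_two (hpos₁ x hx) hle
end

section
/- Define binary trees over an element type by constructors leaf and node(t, a, u), let |x| denote the number of leaves of tree x, and define the potential φ by φ(leaf) = 1 and φ(node(t,a,u)) = φ(t) + (1/2)·log₂|u| + φ(u). Then for every tree x = node(t, a, u): log₂|x| + φ(x) ≥ (1/2)·log₂|t| + log₂|u| + 1 + φ(t) + φ(u). -/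
inductive BTree (α : Type) : Type where
  | leaf : BTree α
  | node : BTree α → α → BTree α → BTree α

def BTree.size {α : Type} : BTree α → ℕ
  | .leaf => 1
  | .node t _ u => t.size + u.size

noncomputable def BTree.phi {α : Type} : BTree α → ℝ
  | .leaf => 1
  | .node t _ u => t.phi + (1/2) * Real.logb 2 (u.size : ℝ) + u.phi

lemma BTree.size_pos {α : Type} (t : BTree α) : 0 < t.size := by
  induction t with
  | leaf => simp [BTree.size]
  | node l a r ih1 ih2 => simp [BTree.size]; omega

theorem swap_weakening {α : Type} (t u : BTree α) (a : α) :
    Real.logb 2 ((BTree.node t a u).size : ℝ) + (BTree.node t a u).phi ≥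
      (1/2) * Real.logb 2 (t.size : ℝ) + Real.logb 2 (u.size : ℝ) + 1 + t.phi + u.phi := by
  have ht : (0:ℝ) < (t.size : ℝ) := by exact_mod_cast t.size_pos
  have hu : (0:ℝ) < (u.size : ℝ) := by exact_mod_cast u.size_pos
  have hs : (0:ℝ) < (t.size:ℝ) + (u.size:ℝ) := by linarith
  have key : Real.logb 2 ((t.size:ℝ) + (u.size:ℝ)) ≥
      (1/2) * Real.logb 2 (t.size : ℝ) + (1/2) * Real.logb 2 (u.size : ℝ) + 1 := by
    have hsq : 4 * ((t.size:ℝ) * u.size) ≤ ((t.size:ℝ) + u.size)^2 := by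
      nlinarith [sq_nonneg ((t.size:ℝ) - u.size)]
    have h2 : Real.logb 2 (4 * ((t.size:ℝ) * u.size)) ≤
        Real.logb 2 (((t.size:ℝ) + u.size)^2) :=
      (Real.logb_le_logb (by norm_num) (by positivity) (by positivity)).mpr hsq
    have e1 : Real.logb 2 (((t.size:ℝ) + u.size)^2) = 2 * Real.logb 2 ((t.size:ℝ) + u.size) := by
      rw [Real.logb_pow]; push_cast; ring
    have e2 : Real.logb 2 (4 * ((t.size:ℝ) * u.size)) =
        2 + (Real.logb 2 (t.size:ℝ) + Real.logb 2 (u.size:ℝ)) := by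
      rw [Real.logb_mul (by norm_num) (by positivity), Real.logb_mul ht.ne' hu.ne',
        show (4:ℝ) = 2^2 by norm_num, Real.logb_pow, Real.logb_self_eq_one (by norm_num)]
      push_cast; ring
    rw [e1, e2] at h2
    linarith
  simp only [BTree.size, BTree.phi] at *
  push_cast
  linarith
end

section
/- Define binary trees by constructors leaf and node(t, a, u), with |leaf| = 1 and |node(t,a,u)| = |t| + |u|. Define φ(leaf) = 1 and φ(node(t,a,u)) = φ(t) + (1/2)·log₂|u| + φ(u). Define swap(leaf) = leaf and swap(node(t,a,u)) = node(swap(u), a, t), with cost c(leaf) = 0 and c(node(t,a,u)) = 1 + c(u). Then for every tree x: log₂|x| + φ(x) ≥ c(x) + φ(swap(x)). -/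
def BTree.swap {α : Type} : BTree α → BTree α
  | .leaf => .leaf
  | .node t a u => .node u.swap a t

def BTree.cost {α : Type} : BTree α → ℝ
  | .leaf => 0
  | .node _ _ u => 1 + u.cost

lemma BTree.one_le_size {α : Type} (x : BTree α) : 1 ≤ x.size := by
  induction x with
  | leaf => simp [BTree.size]
  | node t a u ht hu => simp [BTree.size]; omega

lemma logb_add_ge (a b : ℝ) (ha : 1 ≤ a) (hb : 1 ≤ b) :
    Real.logb 2 (a + b) ≥ 1 + (1/2) * Real.logb 2 a + (1/2) * Real.logb 2 b := by
  have ha0 : (0:ℝ) < a := lt_of_lt_of_le one_pos ha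
  have hb0 : (0:ℝ) < b := lt_of_lt_of_le one_pos hb
  have key : 2 * Real.sqrt (a * b) ≤ a + b := by
    nlinarith [Real.sq_sqrt (mul_nonneg ha0.le hb0.le),
      Real.sqrt_nonneg (a*b), sq_nonneg (Real.sqrt (a*b) * 2 - (a+b)),
      sq_nonneg (a - b)]
  have hs0 : 0 < Real.sqrt (a*b) := Real.sqrt_pos.mpr (mul_pos ha0 hb0)
  have h1 : Real.logb 2 (2 * Real.sqrt (a*b)) ≤ Real.logb 2 (a + b) :=
    Real.logb_le_logb_of_le (by norm_num) (by positivity) key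
  have h2 : Real.logb 2 (2 * Real.sqrt (a*b))
      = 1 + (1/2) * Real.logb 2 a + (1/2) * Real.logb 2 b := by
    rw [Real.logb_mul (by norm_num) hs0.ne', Real.logb_self_eq_one one_lt_two]
    have : Real.logb 2 (Real.sqrt (a*b)) = (1/2) * Real.logb 2 (a*b) := by
      rw [Real.logb, Real.log_sqrt (mul_nonneg ha0.le hb0.le), Real.logb]
      ring
    rw [this, Real.logb_mul ha0.ne' hb0.ne']
    ring
  linarith [h1, h2 ▸ h1]

theorem swap_amortised {α : Type} (x : BTree α) :
    Real.logb 2 (x.size : ℝ) + x.phi ≥ x.cost + x.swap.phi := by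
  induction x with
  | leaf => simp [BTree.size, BTree.phi, BTree.swap, BTree.cost]
  | node t a u ht hu =>
    have h1 : (1:ℝ) ≤ (t.size : ℝ) := by exact_mod_cast t.one_le_size
    have h2 : (1:ℝ) ≤ (u.size : ℝ) := by exact_mod_cast u.one_le_size
    have key := logb_add_ge (t.size : ℝ) (u.size : ℝ) h1 h2
    simp only [BTree.size, BTree.phi, BTree.swap, BTree.cost, Nat.cast_add] at *
    linarith
end
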